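/- arXiv:1812.07359 — 2 statements merged into one kernel-verified Lean document; each statement's English description precedes it below -/
import Mathlib

section
/- Let T = (Q, Σ, δ) be a G-automaton, u ∈ Σ*, and n = |Q*∘u|. If u is expandable, then u is expandable by some word x with |x| < (2|Q|)^{2n}. -/
/-- An S-automaton: a deterministic, possibly partial, letter-to-letter transducer.
`δ q a = some (b, p)` means there is a transition q --a/b--> p. Determinism is built in. -/
structure SAut (Q A : Type) where
  δ : Q → A → Option (A × Q)

namespace SAut

variable {Q A : Type}

/-- The run of the automaton starting in `q` on input `u`: output word and end state. -/
def run (T : SAut Q A) (q : Q) : List A → Option (List A × Q)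
  | [] => some ([], q)
  | a :: as => (T.δ q a).bind fun bp => (T.run bp.2 as).map fun vr => (bp.1 :: vr.1, vr.2)

/-- The partial action `q ∘ u` of a single state on a word (the output of the run). -/
def act1 (T : SAut Q A) (q : Q) (u : List A) : Option (List A) := (T.run q u).map Prod.fst

/-- The dual action `q · u` of a word on a single state (the end state of the run). -/
def dual1 (T : SAut Q A) (q : Q) (u : List A) : Option Q := (T.run q u).map Prod.snd

/-- The partial action of a state sequence on a word; the head of the list acts first
(so the list `[q₁, q₂, …, q_ℓ]` represents the composition `q_ℓ ∘ ⋯ ∘ q₂ ∘ q₁`). -/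
def act (T : SAut Q A) : List Q → List A → Option (List A)
  | [], u => some u
  | q :: qs, u => (T.act1 q u).bind (T.act qs)

/-- The dual partial action of a word on a state sequence:
`ε · u = ε` and `(p⃗ q) · u = (p⃗ · (q ∘ u)) (q · u)` (head of the list acts first). -/
def dual (T : SAut Q A) : List Q → List A → Option (List Q)
  | [], _ => some []
  | q :: qs, u =>
      (T.act1 q u).bind fun v =>
        (T.dual1 q u).bind fun qd =>
          (T.dual qs v).map fun rest => qd :: rest

/-- The orbit `Q* ∘ u` of a word under the partial action of all state sequences. -/
def orbit (T : SAut Q A) (u : List A) : Set (List A) := { v | ∃ l : List Q, T.act l u = some v }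

/-- Completeness: every state has a transition for every input letter. -/
def Complete (T : SAut Q A) : Prop := ∀ q a, (T.δ q a).isSome

/-- Reversibility: every state has at most one incoming transition with a given input letter. -/
def Reversible (T : SAut Q A) : Prop :=
  ∀ p p' a b b' q, T.δ p a = some (b, q) → T.δ p' a = some (b', q) → p = p'

/-- Invertibility (inverse-determinism): for every state and output letter there is
at most one transition with that output letter. -/
def Invertible (T : SAut Q A) : Prop :=
  ∀ q a a' b p p', T.δ q a = some (b, p) → T.δ q a' = some (b, p') → a = a'

/-- The disjoint union of two automata over the same alphabet. -/
def union (T₁ T₂ : SAut Q A) : SAut (Q ⊕ Q) A where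
  δ s a := match s with
    | Sum.inl q => (T₁.δ q a).map fun bp => (bp.1, Sum.inl bp.2)
    | Sum.inr q => (T₂.δ q a).map fun bp => (bp.1, Sum.inr bp.2)

open Classical in
/-- The inverse automaton: swap input and output labels on every transition.
(For an invertible automaton this is the deterministic inverse automaton.) -/
noncomputable def inv (T : SAut Q A) : SAut Q A where
  δ q b := if h : ∃ ap : A × Q, T.δ q ap.1 = some (b, ap.2) then some h.choose else none

/-- The union `T ⊔ T̄` of an automaton with its inverse; its states are `Q̃ = Q ⊔ Q̄`. -/
noncomputable def tilde (T : SAut Q A) : SAut (Q ⊕ Q) A := T.union T.inv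

/-- `Stab¹(u)`: all state sequences (including the empty one) defined on `u` that fix `u`. -/
def stab1 (T : SAut Q A) (u : List A) : Set (List Q) := { l | T.act l u = some u }

/-- `Stab(u)`: all nonempty state sequences defined on `u` that fix `u`. -/
def stab (T : SAut Q A) (u : List A) : Set (List Q) := { l | l ≠ [] ∧ T.act l u = some u }

/-- The shifted stabilizer `Stab¹(u) · u` as a set of state sequences. -/
def stab1Shift (T : SAut Q A) (u : List A) : Set (List Q) :=
  { l' | ∃ l ∈ T.stab1 u, T.dual l u = some l' }

/-- The orbit `Stab¹(u) · u ∘ x` of `x` under the shifted stabilizer. -/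
def stab1ShiftOrbit (T : SAut Q A) (u x : List A) : Set (List A) :=
  { y | ∃ l' ∈ T.stab1Shift u, T.act l' x = some y }

/-- The shifted stabilizer `Stab(u) · u ∘` as a set of partial functions on words. -/
def shiftedStabFun (T : SAut Q A) (u : List A) : Set (List A → Option (List A)) :=
  { f | ∃ l ∈ T.stab u, ∃ l', T.dual l u = some l' ∧ f = T.act l' }

end SAut

namespace ExpdAux

variable {S S0 Q A : Type}

/-- Total run of a complete automaton given by transition function `f`. -/
def runF (f : S → A → A × S) : S → List A → List A × S
  | q, [] => ([], q)
  | q, a :: as => ((f q a).1 :: (runF f (f q a).2 as).1, (runF f (f q a).2 as).2)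

/-- Total action of a state sequence (head acts first). -/
def actF (f : S → A → A × S) : List S → List A → List A
  | [], u => u
  | q :: qs, u => actF f qs (runF f q u).1

/-- Total dual action. -/
def dualF (f : S → A → A × S) : List S → List A → List S
  | [], _ => []
  | q :: qs, u => (runF f q u).2 :: dualF f qs (runF f q u).1

@[simp] lemma runF_nil (f : S → A → A × S) (q : S) : runF f q [] = ([], q) := rfl
@[simp] lemma actF_nil (f : S → A → A × S) (u : List A) : actF f [] u = u := rfl
@[simp] lemma actF_cons (f : S → A → A × S) (q : S) (qs : List S) (u : List A) :
    actF f (q :: qs) u = actF f qs (runF f q u).1 := rfl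

lemma length_runF (f : S → A → A × S) : ∀ (u : List A) (q : S), (runF f q u).1.length = u.length
  | [], _ => rfl
  | a :: as, q => by simp [runF, length_runF f as]

lemma length_actF (f : S → A → A × S) : ∀ (l : List S) (u : List A), (actF f l u).length = u.length
  | [], _ => rfl
  | q :: qs, u => by simp [actF, length_actF f qs, length_runF]

lemma length_dualF (f : S → A → A × S) : ∀ (l : List S) (u : List A), (dualF f l u).length = l.length
  | [], _ => rfl
  | q :: qs, u => by simp [dualF, length_dualF f qs]

lemma runF_append (f : S → A → A × S) : ∀ (u v : List A) (q : S),
    runF f q (u ++ v) = ((runF f q u).1 ++ (runF f (runF f q u).2 v).1, (runF f (runF f q u).2 v).2)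
  | [], v, q => by simp [runF]
  | a :: as, v, q => by simp [runF, runF_append f as v]

lemma actF_append (f : S → A → A × S) : ∀ (l : List S) (u v : List A),
    actF f l (u ++ v) = actF f l u ++ actF f (dualF f l u) v
  | [], u, v => rfl
  | q :: qs, u, v => by
      simp only [actF, dualF, runF_append]
      exact actF_append f qs _ _

lemma actF_concat (f : S → A → A × S) : ∀ (l₁ l₂ : List S) (u : List A),
    actF f (l₁ ++ l₂) u = actF f l₂ (actF f l₁ u)
  | [], l₂, u => rfl
  | q :: qs, l₂, u => by simp [actF, actF_concat f qs l₂]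

/-- The orbit of a word under the total action. -/
def orbitF (f : S → A → A × S) (u : List A) : Set (List A) :=
  Set.range fun l : List S => actF f l u

lemma self_mem_orbitF (f : S → A → A × S) (u : List A) : u ∈ orbitF f u := ⟨[], rfl⟩

lemma orbitF_finite [Finite A] (f : S → A → A × S) (u : List A) : (orbitF f u).Finite := by
  apply (List.finite_length_eq A u.length).subset
  rintro v ⟨l, rfl⟩
  exact length_actF f l u


lemma exists_short [Finite A] (f : S → A → A × S) (u : List A) (v : List A)
    (hv : v ∈ orbitF f u) : ∃ l : List S, actF f l u = v ∧ l.length < (orbitF f u).ncard := by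
  classical
  obtain ⟨l0, hl0⟩ := hv
  have hex : ∃ k, ∃ l : List S, l.length = k ∧ actF f l u = v := ⟨l0.length, l0, rfl, hl0⟩
  obtain ⟨l, hlen, hact⟩ := Nat.find_spec hex
  refine ⟨l, hact, ?_⟩
  by_contra hge
  push_neg at hge
  have hfin := orbitF_finite f u
  have hcard : (orbitF f u).ncard = hfin.toFinset.card := Set.ncard_eq_toFinset_card _ hfin
  have hmaps : ∀ i ∈ Finset.range (l.length + 1), actF f (l.take i) u ∈ hfin.toFinset := by
    intro i _
    simp only [Set.Finite.mem_toFinset]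
    exact ⟨l.take i, rfl⟩
  have hlt : hfin.toFinset.card < (Finset.range (l.length + 1)).card := by
    rw [Finset.card_range]; omega
  obtain ⟨i, hi, j, hj, hij, heq⟩ :=
    Finset.exists_ne_map_eq_of_card_lt_of_maps_to hlt hmaps
  simp only [Finset.mem_range] at hi hj
  have key : ∀ i j : ℕ, i < j → j < l.length + 1 →
      actF f (l.take i) u = actF f (l.take j) u → False := by
    intro i j hlt' hj' heq'
    have hshort : ∃ l' : List S, l'.length = i + (l.length - j) ∧ actF f l' u = v :=
      ⟨l.take i ++ l.drop j, by
        rw [List.length_append, List.length_take, List.length_drop]; omega, by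
        have : actF f (l.take i ++ l.drop j) u = actF f (l.take j ++ l.drop j) u := by
          rw [actF_concat, actF_concat, heq']
        rw [this, List.take_append_drop]; exact hact⟩
    exact Nat.find_min hex (by omega) hshort
  rcases hij.lt_or_gt with hlt' | hlt'
  · exact key i j hlt' hj heq
  · exact key j i hlt' hi heq.symm

lemma take_actF_append (f : S → A → A × S) (l : List S) (u x : List A) :
    (actF f l (u ++ x)).take u.length = actF f l u := by
  rw [actF_append]
  have h := length_actF f l u
  rw [← h, List.take_left]

-- counting: two distinct orbit elements of u++x with the same u-prefix force expansion
lemma expand_of_two [Finite A] (f : S → A → A × S) (u x : List A) (w₁ w₂ : List A)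
    (h1 : w₁ ∈ orbitF f (u ++ x)) (h2 : w₂ ∈ orbitF f (u ++ x)) (hne : w₁ ≠ w₂)
    (ht : w₁.take u.length = w₂.take u.length) :
    (orbitF f u).ncard < (orbitF f (u ++ x)).ncard := by
  classical
  have hfx := orbitF_finite f (u ++ x)
  have hfu := orbitF_finite f u
  have himg : hfx.toFinset.image (fun w => w.take u.length) = hfu.toFinset := by
    ext v
    simp only [Finset.mem_image, Set.Finite.mem_toFinset]
    constructor
    · rintro ⟨w, ⟨l, rfl⟩, rfl⟩
      exact ⟨l, (take_actF_append f l u x).symm⟩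
    · rintro ⟨l, rfl⟩
      exact ⟨actF f l (u ++ x), ⟨l, rfl⟩, take_actF_append f l u x⟩
  have herase : (hfx.toFinset.erase w₂).image (fun w => w.take u.length) =
      hfx.toFinset.image (fun w => w.take u.length) := by
    apply Finset.Subset.antisymm (Finset.image_subset_image (Finset.erase_subset _ _))
    intro v hv
    simp only [Finset.mem_image, Set.Finite.mem_toFinset] at hv ⊢
    obtain ⟨w, hw, rfl⟩ := hv
    by_cases hw2 : w = w₂
    · exact ⟨w₁, Finset.mem_erase.2 ⟨hne, hfx.mem_toFinset.2 h1⟩, by rw [hw2, ht]⟩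
    · exact ⟨w, Finset.mem_erase.2 ⟨hw2, hfx.mem_toFinset.2 hw⟩, rfl⟩
  have h2' : w₂ ∈ hfx.toFinset := hfx.mem_toFinset.2 h2
  calc (orbitF f u).ncard = hfu.toFinset.card := Set.ncard_eq_toFinset_card _ hfu
    _ = ((hfx.toFinset.erase w₂).image (fun w => w.take u.length)).card := by
        rw [herase, himg]
    _ ≤ (hfx.toFinset.erase w₂).card := Finset.card_image_le
    _ < hfx.toFinset.card := Finset.card_erase_lt_of_mem h2'
    _ = (orbitF f (u ++ x)).ncard := (Set.ncard_eq_toFinset_card _ hfx).symm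

lemma two_of_expand [Finite A] (f : S → A → A × S) (u x : List A)
    (h : (orbitF f u).ncard < (orbitF f (u ++ x)).ncard) :
    ∃ l₁ l₂ : List S, actF f l₁ u = actF f l₂ u ∧ actF f l₁ (u ++ x) ≠ actF f l₂ (u ++ x) := by
  classical
  have hfx := orbitF_finite f (u ++ x)
  have hfu := orbitF_finite f u
  have hlt : hfu.toFinset.card < hfx.toFinset.card := by
    have e1 : (orbitF f u).ncard = hfu.toFinset.card := Set.ncard_eq_toFinset_card _ hfu
    have e2 : (orbitF f (u ++ x)).ncard = hfx.toFinset.card := Set.ncard_eq_toFinset_card _ hfx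
    omega
  have hmaps : ∀ w ∈ hfx.toFinset, w.take u.length ∈ hfu.toFinset := by
    intro w hw
    simp only [Set.Finite.mem_toFinset] at hw ⊢
    obtain ⟨l, rfl⟩ := hw
    exact ⟨l, (take_actF_append f l u x).symm⟩
  obtain ⟨w₁, hw₁, w₂, hw₂, hne, heq⟩ :=
    Finset.exists_ne_map_eq_of_card_lt_of_maps_to hlt hmaps
  simp only [Set.Finite.mem_toFinset] at hw₁ hw₂
  obtain ⟨l₁, rfl⟩ := hw₁
  obtain ⟨l₂, rfl⟩ := hw₂
  refine ⟨l₁, l₂, ?_, hne⟩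
  rw [← take_actF_append f l₁ u x, ← take_actF_append f l₂ u x, heq]


section Inverse

lemma runF_bar (g : S → A → A × S) (bar : S → S)
    (hbar : ∀ s a, g (bar s) ((g s a).1) = (a, bar ((g s a).2))) :
    ∀ (w : List A) (s : S),
    runF g (bar s) ((runF g s w).1) = (w, bar ((runF g s w).2))
  | [], s => rfl
  | a :: as, s => by
      show runF g (bar s) ((g s a).1 :: (runF g (g s a).2 as).1) = _
      simp only [runF, hbar s a]
      rw [runF_bar g bar hbar as (g s a).2]

def invSeq (bar : S → S) (L : List S) : List S := (L.map bar).reverse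

lemma actF_invSeq (g : S → A → A × S) (bar : S → S)
    (hbar : ∀ s a, g (bar s) ((g s a).1) = (a, bar ((g s a).2))) :
    ∀ (L : List S) (w : List A),
    actF g (invSeq bar L) (actF g L w) = w
  | [], w => rfl
  | q :: L', w => by
      have h1 : invSeq bar (q :: L') = invSeq bar L' ++ [bar q] := by
        simp [invSeq]
      rw [h1, actF_concat]
      show actF g [bar q] (actF g (invSeq bar L') (actF g L' (runF g q w).1)) = w
      rw [actF_invSeq g bar hbar L' (runF g q w).1]
      show (runF g (bar q) ((runF g q w).1)).1 = w
      rw [runF_bar g bar hbar]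

lemma invSeq_invSeq (bar : S → S) (hbar2 : ∀ s, bar (bar s) = s) (L : List S) :
    invSeq bar (invSeq bar L) = L := by
  have h : bar ∘ bar = id := funext hbar2
  simp [invSeq, List.map_reverse, List.map_map, h]

lemma actF_invSeq' (g : S → A → A × S) (bar : S → S)
    (hbar : ∀ s a, g (bar s) ((g s a).1) = (a, bar ((g s a).2)))
    (hbar2 : ∀ s, bar (bar s) = s) (L : List S) (w : List A) :
    actF g L (actF g (invSeq bar L) w) = w := by
  have h := actF_invSeq g bar hbar (invSeq bar L) w
  rw [invSeq_invSeq bar hbar2 L] at h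
  exact h

lemma orbit_eq [Finite A] (g : S → A → A × S) (bar : S → S)
    (hbar : ∀ s a, g (bar s) ((g s a).1) = (a, bar ((g s a).2)))
    (f : S0 → A → A × S0) (ι : S0 → S)
    (hι : ∀ (q : S0) (w : List A), runF g (ι q) w = ((runF f q w).1, ι (runF f q w).2))
    (hcover : ∀ s : S, (∃ q, s = ι q) ∨ ∃ q, s = bar (ι q)) (u : List A) :
    orbitF g u = orbitF f u := by
  have actι : ∀ (l : List S0) (w : List A), actF g (l.map ι) w = actF f l w := by
    intro l
    induction l with
    | nil => intro w; rfl
    | cons q l ih => intro w; simp only [List.map_cons, actF, hι]; exact ih _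
  have hstepι : ∀ (q : S0) (v : List A), v ∈ orbitF f u → (runF f q v).1 ∈ orbitF f u := by
    rintro q v ⟨l, rfl⟩
    refine ⟨l ++ [q], ?_⟩
    show actF f (l ++ [q]) u = _
    rw [actF_concat]
    rfl
  have hstep : ∀ (s : S) (v : List A), v ∈ orbitF f u → (runF g s v).1 ∈ orbitF f u := by
    intro s v hv
    rcases hcover s with ⟨q, rfl⟩ | ⟨q, rfl⟩
    · rw [hι]
      exact hstepι q v hv
    · have hinj : Function.Injective (fun w : List A => (runF g (ι q) w).1) := by
        intro w w' he
        dsimp only at he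
        have h1 := congrArg Prod.fst (runF_bar g bar hbar w (ι q))
        have h2 := congrArg Prod.fst (runF_bar g bar hbar w' (ι q))
        simp only at h1 h2
        rw [← h1, ← h2, he]
      have hmaps : Set.MapsTo (fun w : List A => (runF g (ι q) w).1)
          (orbitF f u) (orbitF f u) := by
        intro w hw
        have h3 := hstepι q w hw
        show (runF g (ι q) w).1 ∈ orbitF f u
        rw [hι]
        exact h3
      have hbij := ((orbitF_finite f u).injOn_iff_bijOn_of_mapsTo hmaps).1 hinj.injOn
      obtain ⟨w, hw, hww⟩ := hbij.surjOn hv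
      have h4 : (runF g (bar (ι q)) v).1 = w := by
        rw [← hww]
        show (runF g (bar (ι q)) ((runF g (ι q) w).1)).1 = w
        rw [runF_bar g bar hbar]
      rw [h4]; exact hw
  have hsub : ∀ (L : List S) (v : List A), v ∈ orbitF f u → actF g L v ∈ orbitF f u := by
    intro L
    induction L with
    | nil => intro v hv; exact hv
    | cons s L ih => intro v hv; exact ih _ (hstep s v hv)
  apply Set.Subset.antisymm
  · rintro v ⟨L, rfl⟩
    exact hsub L u (self_mem_orbitF f u)
  · rintro v ⟨l, rfl⟩
    exact ⟨l.map ι, actι l u⟩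

end Inverse

section Schreier

variable [Finite A]

/-- Schreier-type decomposition: any stabilizing sequence acts (globally) like a
concatenation of short stabilizing sequences. -/
lemma schreier_aux (g : S → A → A × S) (bar : S → S)
    (hbar : ∀ s a, g (bar s) ((g s a).1) = (a, bar ((g s a).2)))
    (hbar2 : ∀ s, bar (bar s) = s) (u : List A) :
    ∀ (s p : List S), p.length + 1 ≤ (orbitF g u).ncard → actF g (p ++ s) u = u →
    ∃ gs : List (List S),
      (∀ t ∈ gs, t.length + 1 ≤ 2 * (orbitF g u).ncard ∧ actF g t u = u) ∧
      ∀ w, actF g gs.flatten w = actF g (p ++ s) w := by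
  intro s
  induction s with
  | nil =>
    intro p hp hfix
    refine ⟨[p], ?_, ?_⟩
    · intro t ht
      simp only [List.mem_singleton] at ht
      subst ht
      rw [List.append_nil] at hfix
      exact ⟨by omega, hfix⟩
    · intro w
      simp [List.flatten]
  | cons q s' ih =>
    intro p hp hfix
    have hw : actF g (p ++ [q]) u ∈ orbitF g u := ⟨p ++ [q], rfl⟩
    obtain ⟨p', hp'act, hp'len⟩ := exists_short g u _ hw
    have hfix' : actF g (p' ++ s') u = u := by
      rw [actF_concat, hp'act, ← actF_concat]
      have : (p ++ [q]) ++ s' = p ++ (q :: s') := by simp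
      rw [this]
      exact hfix
    obtain ⟨gs', hgs', hglob'⟩ := ih p' (by omega) hfix'
    set t : List S := (p ++ [q]) ++ invSeq bar p' with ht
    refine ⟨t :: gs', ?_, ?_⟩
    · intro t' ht'
      rcases List.mem_cons.1 ht' with rfl | h
      · constructor
        · have : t.length = p.length + 1 + p'.length := by
            simp [ht, invSeq]; omega
          omega
        · rw [ht, actF_concat, ← hp'act]
          exact actF_invSeq g bar hbar p' u
      · exact hgs' t' h
    · intro w
      show actF g (t :: gs').flatten w = _
      rw [List.flatten_cons, actF_concat, hglob' (actF g t w)]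
      rw [ht, actF_concat g (p ++ [q]) (invSeq bar p') w,
        actF_concat g p' s', actF_invSeq' g bar hbar hbar2]
      rw [← actF_concat]
      have : (p ++ [q]) ++ s' = p ++ (q :: s') := by simp
      rw [this]

/-- extraction: if a concatenation of u-fixing sequences moves some extension of u,
one of them moves some extension of u. -/
lemma extract (g : S → A → A × S) (u : List A) :
    ∀ (gs : List (List S)), (∀ t ∈ gs, actF g t u = u) →
    ∀ x, actF g gs.flatten (u ++ x) ≠ u ++ x →
    ∃ t ∈ gs, ∃ y, actF g t (u ++ y) ≠ u ++ y := by
  intro gs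
  induction gs with
  | nil =>
    intro _ x hx
    simp [List.flatten, actF] at hx
  | cons t gs' ih =>
    intro hfix x hx
    by_cases hcase : actF g t (u ++ x) = u ++ x
    · rw [List.flatten_cons, actF_concat, hcase] at hx
      obtain ⟨t', ht', y, hy⟩ := ih (fun t' h => hfix t' (List.mem_cons_of_mem _ h)) x hx
      exact ⟨t', List.mem_cons_of_mem _ ht', y, hy⟩
    · exact ⟨t, List.mem_cons_self, x, hcase⟩

end Schreier

section Pumping

/-- shortest word moved by a state sequence is shorter than (#states)^(length) + 1 -/
lemma pumping [Fintype S] [Nonempty S] [DecidableEq A] (g : S → A → A × S) (qv : List S)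
    (x0 : List A) (h : actF g qv x0 ≠ x0) :
    ∃ x : List A, x.length ≤ Fintype.card S ^ qv.length ∧ actF g qv x ≠ x := by
  classical
  have hex : ∃ k, ∃ x : List A, x.length = k ∧ actF g qv x ≠ x := ⟨x0.length, x0, rfl, h⟩
  obtain ⟨x, hlen, hbad⟩ := Nat.find_spec hex
  have hmin : ∀ y : List A, y.length < x.length → actF g qv y = y := by
    intro y hy
    by_contra hne
    exact Nat.find_min hex (by omega) ⟨y, rfl, hne⟩
  refine ⟨x, ?_, hbad⟩
  by_contra hge
  push_neg at hge
  set m := qv.length with hm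
  -- encode the dual state at each prefix position
  have hlen' : ∀ i : ℕ, (dualF g qv (x.take i)).length = m := fun i => length_dualF g qv _
  set enc : ℕ → (Fin m → S) := fun i j => (dualF g qv (x.take i)).get (Fin.cast (hlen' i).symm j)
    with henc
  have hcard : (Finset.univ : Finset (Fin m → S)).card < (Finset.range x.length).card := by
    rw [Finset.card_range, Finset.card_univ, Fintype.card_fun]
    calc Fintype.card S ^ Fintype.card (Fin m) = Fintype.card S ^ m := by rw [Fintype.card_fin]
      _ < x.length := by omega
  obtain ⟨i, hi, j, hj, hij, heq⟩ :=
    Finset.exists_ne_map_eq_of_card_lt_of_maps_to hcard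
      (fun i _ => Finset.mem_univ (enc i))
  simp only [Finset.mem_range] at hi hj
  -- wlog i < j
  have key : ∀ i j : ℕ, i < j → j < x.length → enc i = enc j → False := by
    intro i j hij' hj' heqij
    have hdual : dualF g qv (x.take i) = dualF g qv (x.take j) := by
      apply List.ext_get (by rw [hlen' i, hlen' j])
      intro n h₁ h₂
      have := congrFun heqij ⟨n, by rw [hlen' i] at h₁; exact h₁⟩
      simpa [henc] using this
    set D := actF g (dualF g qv (x.take j)) (x.drop j) with hD
    have hDne : D ≠ x.drop j := by
      intro hDeq
      apply hbad
      conv_lhs => rw [← List.take_append_drop j x]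
      rw [actF_append, hmin (x.take j) (by rw [List.length_take]; omega), ← hD, hDeq]
      exact List.take_append_drop j x
    apply hDne
    have hx' : actF g qv (x.take i ++ x.drop j) = x.take i ++ x.drop j := by
      apply hmin
      rw [List.length_append, List.length_take, List.length_drop]
      omega
    rw [actF_append, hmin (x.take i) (by rw [List.length_take]; omega), hdual, ← hD] at hx'
    exact List.append_cancel_left hx'
  rcases hij.lt_or_gt with h' | h'
  · exact key i j h' hj heq
  · exact key j i h' hi heq.symm

end Pumping

section Bridge

lemma run_eq (T : SAut Q A) (f : Q → A → A × Q) (hf : ∀ q a, T.δ q a = some (f q a)) :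
    ∀ (u : List A) (q : Q), T.run q u = some (runF f q u)
  | [], q => rfl
  | a :: as, q => by
      simp [SAut.run, hf q a, run_eq T f hf as, runF]

lemma act_eq (T : SAut Q A) (f : Q → A → A × Q) (hf : ∀ q a, T.δ q a = some (f q a)) :
    ∀ (l : List Q) (u : List A), T.act l u = some (actF f l u)
  | [], u => rfl
  | q :: qs, u => by
      simp [SAut.act, SAut.act1, run_eq T f hf u q, act_eq T f hf qs, actF]

lemma orbit_eq_SAut (T : SAut Q A) (f : Q → A → A × Q) (hf : ∀ q a, T.δ q a = some (f q a))
    (w : List A) : T.orbit w = orbitF f w := by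
  ext v
  constructor
  · rintro ⟨l, hl⟩
    rw [act_eq T f hf] at hl
    exact ⟨l, Option.some_injective _ hl⟩
  · rintro ⟨l, rfl⟩
    exact ⟨l, act_eq T f hf l w⟩

/-- The total tilde automaton: disjoint union of `f` and its inverse `finv`. -/
def tF (f : Q → A → A × Q) (finv : Q → A → A) : (Q ⊕ Q) → A → A × (Q ⊕ Q)
  | .inl q, a => ((f q a).1, .inl (f q a).2)
  | .inr q, b => (finv q b, .inr (f q (finv q b)).2)

lemma tF_bar (f : Q → A → A × Q) (finv : Q → A → A)
    (hfinv1 : ∀ q b, (f q (finv q b)).1 = b) (hfinv2 : ∀ q a, finv q ((f q a).1) = a) :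
    ∀ (s : Q ⊕ Q) (a : A),
      tF f finv s.swap ((tF f finv s a).1) = (a, ((tF f finv s a).2).swap) := by
  intro s a
  cases s with
  | inl q =>
    show tF f finv (.inr q) ((f q a).1) = _
    simp only [tF, hfinv2 q a]
    rfl
  | inr q =>
    show tF f finv (.inl q) (finv q a) = _
    simp only [tF, hfinv1 q a]
    rfl

lemma tF_inl (f : Q → A → A × Q) (finv : Q → A → A) :
    ∀ (w : List A) (q : Q),
      runF (tF f finv) (Sum.inl q) w = ((runF f q w).1, Sum.inl (runF f q w).2)
  | [], q => rfl
  | a :: as, q => by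
      simp only [runF, tF, tF_inl f finv as (f q a).2]

lemma actF_inl (f : Q → A → A × Q) (finv : Q → A → A) :
    ∀ (l : List Q) (w : List A), actF (tF f finv) (l.map Sum.inl) w = actF f l w
  | [], w => rfl
  | q :: qs, w => by
      simp only [List.map_cons, actF, tF_inl f finv w q]
      exact actF_inl f finv qs _

end Bridge

end ExpdAux

open ExpdAux

/-- for a G-automaton, if `u` is expandable then it is expandable by a word
of length `< (2|Q|)^(2n)` where `n = |Q* ∘ u|`. -/
theorem expandability_upper_bound_group {Q A : Type} [Fintype Q] [Fintype A]
    (T : SAut Q A) (hc : T.Complete) (hinv : T.Invertible) (u : List A)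
    (h : ∃ x : List A, (T.orbit u).ncard < (T.orbit (u ++ x)).ncard) :
    ∃ x : List A, x.length < (2 * Fintype.card Q) ^ (2 * (T.orbit u).ncard) ∧
      (T.orbit u).ncard < (T.orbit (u ++ x)).ncard := by
  classical
  obtain ⟨x0, hx0⟩ := h
  rcases isEmpty_or_nonempty Q with hQ | hQ
  · exfalso
    have horb : ∀ w : List A, T.orbit w = {w} := by
      intro w
      ext v
      constructor
      · rintro ⟨l, hl⟩
        cases l with
        | nil =>
          simp only [SAut.act, Option.some.injEq] at hl
          simp [hl]
        | cons q _ => exact hQ.elim q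
      · rintro rfl
        exact ⟨[], rfl⟩
    rw [horb, horb] at hx0
    simp at hx0
  · -- main case
    set f : Q → A → A × Q := fun q a => (T.δ q a).get (hc q a) with hfdef
    have hf : ∀ q a, T.δ q a = some (f q a) := fun q a => (Option.some_get (hc q a)).symm
    have horb : ∀ w, T.orbit w = orbitF f w := orbit_eq_SAut T f hf
    have hinj' : ∀ q a a', (f q a).1 = (f q a').1 → a = a' := by
      intro q a a' he
      apply hinv q a a' (f q a).1 (f q a).2 (f q a').2
      · rw [hf q a]
      · rw [hf q a']; rw [he]
    have hsurj : ∀ q : Q, Function.Surjective (fun a => (f q a).1) := fun q =>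
      Finite.injective_iff_surjective.mp (fun a a' he => hinj' q a a' he)
    set finv : Q → A → A := fun q b => Function.surjInv (hsurj q) b with hfinvdef
    have hfinv1 : ∀ q b, (f q (finv q b)).1 = b := fun q b => Function.surjInv_eq (hsurj q) b
    have hfinv2 : ∀ q a, finv q ((f q a).1) = a := fun q a =>
      hinj' q _ a (hfinv1 q ((f q a).1))
    set g : (Q ⊕ Q) → A → A × (Q ⊕ Q) := tF f finv with hgdef
    have hbar : ∀ s a, g (Sum.swap s) ((g s a).1) = (a, Sum.swap ((g s a).2)) :=
      tF_bar f finv hfinv1 hfinv2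
    have hbar2 : ∀ s : Q ⊕ Q, Sum.swap (Sum.swap s) = s := fun s => Sum.swap_swap s
    have hcover : ∀ s : Q ⊕ Q, (∃ q, s = Sum.inl q) ∨ ∃ q, s = Sum.swap (Sum.inl q) := by
      intro s
      cases s with
      | inl q => exact Or.inl ⟨q, rfl⟩
      | inr q => exact Or.inr ⟨q, rfl⟩
    have horbg : ∀ w, orbitF g w = orbitF f w := fun w =>
      orbit_eq g Sum.swap hbar f Sum.inl (fun q w => tF_inl f finv w q) hcover w
    have actinl : ∀ (l : List Q) (w : List A), actF g (l.map Sum.inl) w = actF f l w :=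
      actF_inl f finv
    -- a stabilizing, extension-moving sequence in the tilde automaton
    obtain ⟨l₁, l₂, heq, hne⟩ := two_of_expand f u x0 (by rw [← horb u, ← horb (u ++ x0)]; exact hx0)
    set m2 : List (Q ⊕ Q) := l₂.map Sum.inl with hm2
    set s : List (Q ⊕ Q) := (l₁.map Sum.inl) ++ invSeq Sum.swap m2 with hs
    have hsfix : actF g s u = u := by
      rw [hs, actF_concat, actinl, heq, ← actinl l₂, ← hm2]
      exact actF_invSeq g Sum.swap hbar m2 u
    have hsnontriv : actF g s (u ++ x0) ≠ u ++ x0 := by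
      intro hcontra
      apply hne
      have h1 : actF g m2 (actF g s (u ++ x0)) = actF g m2 (u ++ x0) := by rw [hcontra]
      rw [hs, actF_concat, actF_invSeq' g Sum.swap hbar hbar2] at h1
      rw [hm2, actinl, actinl] at h1
      exact h1
    -- Schreier: replace it by a short stabilizing, extension-moving sequence
    have hnpos : 1 ≤ (orbitF g u).ncard :=
      (Set.ncard_pos (orbitF_finite g u)).mpr ⟨u, self_mem_orbitF g u⟩
    obtain ⟨gs, hgs, hglob⟩ := schreier_aux g Sum.swap hbar hbar2 u s []
      (by simpa using hnpos) (by simpa using hsfix)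
    have hflat : actF g gs.flatten (u ++ x0) ≠ u ++ x0 := by
      rw [hglob]
      simpa using hsnontriv
    obtain ⟨t, htgs, y, hty⟩ := extract g u gs (fun t ht => (hgs t ht).2) x0 hflat
    obtain ⟨htlen, htfix⟩ := hgs t htgs
    -- the dual sequence moves some word
    set qv : List (Q ⊕ Q) := dualF g t u with hqvdef
    have hqv : actF g qv y ≠ y := by
      intro hcontra
      apply hty
      rw [actF_append, htfix, ← hqvdef, hcontra]
    -- pumping: a short moved word
    obtain ⟨x, hxlen, hxbad⟩ := pumping g qv y hqv
    have hcards : Fintype.card (Q ⊕ Q) = 2 * Fintype.card Q := by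
      rw [Fintype.card_sum]; omega
    have hqvlen : qv.length = t.length := length_dualF g t u
    have hnu : (orbitF g u).ncard = (T.orbit u).ncard := by rw [horbg u, ← horb u]
    refine ⟨x, ?_, ?_⟩
    · have hQpos : 1 ≤ Fintype.card Q := Fintype.card_pos
      have hexp : qv.length < 2 * (T.orbit u).ncard := by omega
      calc x.length ≤ (2 * Fintype.card Q) ^ qv.length := by rw [← hcards]; exact hxlen
        _ < (2 * Fintype.card Q) ^ (2 * (T.orbit u).ncard) :=
            Nat.pow_lt_pow_right (by omega) hexp
    · have hkey : actF g t (u ++ x) ≠ u ++ x := by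
        rw [actF_append, htfix, ← hqvdef]
        intro hcontra
        exact hxbad (List.append_cancel_left hcontra)
      have hw1 : actF g t (u ++ x) ∈ orbitF f (u ++ x) := by
        rw [← horbg]; exact ⟨t, rfl⟩
      have htake : (actF g t (u ++ x)).take u.length = (u ++ x).take u.length := by
        rw [actF_append, htfix, List.take_left, List.take_left]
      rw [horb u, horb (u ++ x)]
      exact expand_of_two f u x _ _ hw1 (self_mem_orbitF f (u ++ x)) hkey htake
end

section
/- Let T = (Q, Σ, δ) be an S-automaton, u ∈ Σ*, n = |Q*∘u|, and k ≥ 1. Then u is k-expandable if and only if it is k-expandable by some word x with |x| < (max{2, |Q|})^{|Σ|(n+k)²} · 2^{C(n+k, 2)}, where C(n+k, 2) is the binomial coefficient. -/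
open Finset in
lemma card_ltpairs (m : ℕ) :
    ((Finset.univ : Finset (Fin m × Fin m)).filter fun p => p.1 < p.2).card ≤ m.choose 2 := by
  have h : ((Finset.univ : Finset (Fin m × Fin m)).filter fun p => p.1 < p.2).card ≤
      (Finset.powersetCard 2 (Finset.univ : Finset (Fin m))).card := by
    apply Finset.card_le_card_of_injOn (fun p => ({p.1, p.2} : Finset (Fin m)))
    · intro p hp
      simp only [Finset.mem_coe, Finset.mem_filter] at hp
      rw [Finset.mem_coe, Finset.mem_powersetCard]
      exact ⟨Finset.subset_univ _, Finset.card_pair (ne_of_lt hp.2)⟩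
    · intro p hp p' hp' heq
      simp only [Finset.coe_filter, Set.mem_setOf_eq] at hp hp'
      have heq' : ({p.1, p.2} : Set (Fin m)) = {p'.1, p'.2} := by
        have := congrArg (fun s : Finset (Fin m) => (s : Set (Fin m))) heq
        simpa using this
      rw [Set.pair_eq_pair_iff] at heq'
      rename' heq' => heq
      rcases heq with ⟨h1, h2⟩ | ⟨h1, h2⟩
      · exact Prod.ext h1 h2
      · exfalso; rw [h1, h2] at hp; exact absurd (hp.2.trans hp'.2) (lt_irrefl _)
  rw [Finset.card_powersetCard, Finset.card_univ, Fintype.card_fin] at h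
  exact h

lemma geom_sum_lt_nat {M : ℕ} (hM : 2 ≤ M) : ∀ m : ℕ, (Finset.range m).sum (M ^ ·) < M ^ m := by
  intro m
  induction m with
  | zero => simp
  | succ n ih =>
    rw [Finset.sum_range_succ, pow_succ]
    have : M ^ n * 2 ≤ M ^ n * M := Nat.mul_le_mul_left _ hM
    omega

section lists
variable (Q : Type) [Fintype Q]

open Classical in
noncomputable def Eset : ℕ → Finset (List Q)
  | 0 => {[]}
  | d + 1 => (Finset.univ ×ˢ Eset d).image fun p => p.1 :: p.2

lemma mem_Eset : ∀ (d : ℕ) (l : List Q), l ∈ Eset Q d ↔ l.length = d := by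
  intro d
  induction d with
  | zero => intro l; simp [Eset, List.length_eq_zero_iff]
  | succ n ih =>
    intro l
    simp only [Eset, Finset.mem_image, Finset.mem_product, Finset.mem_univ, true_and]
    constructor
    · rintro ⟨⟨q, t⟩, ht, rfl⟩; simp [(ih t).mp ht]
    · intro hl
      cases l with
      | nil => simp at hl
      | cons q t => exact ⟨(q, t), (ih t).mpr (by simpa using hl), rfl⟩

lemma card_Eset : ∀ d : ℕ, (Eset Q d).card ≤ Fintype.card Q ^ d := by
  intro d
  induction d with
  | zero => simp [Eset]
  | succ n ih =>
    calc (Eset Q (n+1)).card ≤ (Finset.univ ×ˢ Eset Q n).card := by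
          classical exact Finset.card_image_le
      _ = Fintype.card Q * (Eset Q n).card := by rw [Finset.card_product, Finset.card_univ]
      _ ≤ Fintype.card Q * Fintype.card Q ^ n := Nat.mul_le_mul_left _ ih
      _ = Fintype.card Q ^ (n + 1) := by ring

open Classical in
noncomputable def Fset (d : ℕ) : Finset (List Q) := (Finset.range (d + 1)).biUnion (Eset Q)

lemma mem_Fset (d : ℕ) (l : List Q) : l ∈ Fset Q d ↔ l.length ≤ d := by
  simp only [Fset, Finset.mem_biUnion, Finset.mem_range, mem_Eset]
  constructor
  · rintro ⟨t, ht, rfl⟩; omega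
  · intro h; exact ⟨l.length, by omega, rfl⟩

lemma card_Fset {m : ℕ} (hm : 1 ≤ m) {M : ℕ} (hM : 2 ≤ M) (hQM : Fintype.card Q ≤ M) :
    (Fset Q (m - 1)).card ≤ M ^ m := by
  classical
  rw [Fset]
  calc ((Finset.range (m-1+1)).biUnion (Eset Q)).card
      ≤ (Finset.range (m - 1 + 1)).sum fun t => (Eset Q t).card :=
        Finset.card_biUnion_le
    _ ≤ (Finset.range m).sum fun t => (Eset Q t).card := by
        apply Finset.sum_le_sum_of_subset; apply Finset.range_subset_range.mpr; omega
    _ ≤ (Finset.range m).sum (M ^ ·) := by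
        apply Finset.sum_le_sum
        intro t _
        exact le_trans (card_Eset Q t) (Nat.pow_le_pow_left hQM t)
    _ ≤ M ^ m := le_of_lt (geom_sum_lt_nat hM m)

end lists

namespace SAut

variable {Q A : Type}

-- length preservation
theorem run_length (T : SAut Q A) : ∀ (u : List A) (q : Q) (v : List A) (p : Q),
    T.run q u = some (v, p) → v.length = u.length := by
  intro u
  induction u with
  | nil => intro q v p h; simp [run] at h; simp [h.1]
  | cons a as ih =>
    intro q v p h
    simp only [run, Option.bind_eq_some_iff, Option.map_eq_some_iff] at h
    obtain ⟨bp, _, ⟨vr, hvr, hv⟩⟩ := h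
    cases hv
    simp [ih bp.2 vr.1 vr.2 hvr]

theorem act1_length (T : SAut Q A) {q : Q} {u v : List A} (h : T.act1 q u = some v) :
    v.length = u.length := by
  simp only [act1, Option.map_eq_some_iff] at h
  obtain ⟨⟨w, p⟩, hw, rfl⟩ := h
  exact T.run_length u q w p hw

theorem act_length (T : SAut Q A) : ∀ (l : List Q) (u v : List A),
    T.act l u = some v → v.length = u.length := by
  intro l
  induction l with
  | nil => intro u v h; simp [act] at h; simp [h]
  | cons q qs ih =>
    intro u v h
    simp only [act, Option.bind_eq_some_iff] at h
    obtain ⟨w, hw, hv⟩ := h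
    rw [ih w v hv, T.act1_length hw]

theorem dual_length (T : SAut Q A) : ∀ (l : List Q) (u : List A) (l' : List Q),
    T.dual l u = some l' → l'.length = l.length := by
  intro l
  induction l with
  | nil => intro u l' h; simp [dual] at h; simp [h]
  | cons q qs ih =>
    intro u l' h
    simp only [dual, Option.bind_eq_some_iff, Option.map_eq_some_iff] at h
    obtain ⟨v, hv, qd, hqd, rest, hrest, rfl⟩ := h
    simp [ih v rest hrest]

theorem run_append (T : SAut Q A) : ∀ (u x : List A) (q : Q),
    T.run q (u ++ x) = (T.run q u).bind fun wp =>
      (T.run wp.2 x).map fun vr => (wp.1 ++ vr.1, vr.2) := by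
  intro u
  induction u with
  | nil =>
    intro x q
    simp only [List.nil_append, run, Option.bind_some]
    cases T.run q x <;> simp
  | cons a as ih =>
    intro x q
    show T.run q (a :: (as ++ x)) = _
    rw [run, run]
    cases h : T.δ q a with
    | none => simp
    | some bp =>
      simp only [Option.bind_some]
      rw [ih x bp.2]
      cases has : T.run bp.2 as with
      | none => simp
      | some wp =>
        simp only [Option.bind_some, Option.map_some]
        cases hx : T.run wp.2 x <;> simp

theorem act_append_seq (T : SAut Q A) : ∀ (l₁ l₂ : List Q) (u : List A),
    T.act (l₁ ++ l₂) u = (T.act l₁ u).bind (T.act l₂) := by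
  intro l₁
  induction l₁ with
  | nil => intro l₂ u; simp [act]
  | cons q qs ih =>
    intro l₂ u
    simp only [List.cons_append, act]
    cases T.act1 q u <;> simp [ih]

theorem act_nil_input (T : SAut Q A) : ∀ (l : List Q), T.act l [] = some [] := by
  intro l
  induction l with
  | nil => simp [act]
  | cons q qs ih => simp [act, act1, run, ih]

/-- Key decomposition of the action on a concatenated word. -/
theorem act_word_append (T : SAut Q A) : ∀ (l : List Q) (u x : List A),
    T.act l (u ++ x) = (T.act l u).bind fun wu =>
      (T.dual l u).bind fun l' => (T.act l' x).map (wu ++ ·) := by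
  intro l
  induction l with
  | nil => intro u x; simp [act, dual]
  | cons q qs ih =>
    intro u x
    simp only [act, dual, act1, dual1, run_append]
    cases hr : T.run q u with
    | none => simp
    | some wp =>
      obtain ⟨wu1, p⟩ := wp
      simp only [Option.bind_some, Option.map_some]
      cases hx : T.run p x with
      | none =>
        cases hq : T.act qs wu1 with
        | none => simp [hq]
        | some w2 =>
          cases hd : T.dual qs wu1 with
          | none => simp [hq, hd]
          | some l'' =>
            simp [hq, hd, act, act1, hx]
      | some vr =>
        obtain ⟨wx1, r⟩ := vr
        simp only [Option.map_some, Option.bind_some]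
        rw [ih]
        cases hq : T.act qs wu1 with
        | none => simp [hq]
        | some w2 =>
          cases hd : T.dual qs wu1 with
          | none => simp [hq, hd]
          | some l'' =>
            simp [hq, hd, act, act1, hx, List.append_assoc]

/-- If the action is defined then so is the dual. -/
theorem dual_isSome_of_act (T : SAut Q A) {l : List Q} {u wu : List A}
    (h : T.act l u = some wu) : ∃ l', T.dual l u = some l' := by
  have h2 := T.act_word_append l u []
  rw [List.append_nil, h] at h2
  simp only [Option.bind_some] at h2
  cases hd : T.dual l u with
  | none => rw [hd] at h2; simp at h2
  | some l' => exact ⟨l', rfl⟩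


def Rset (T : SAut Q A) (w : List A) (d : ℕ) : Set (List A) :=
  {v | ∃ l : List Q, l.length ≤ d ∧ T.act l w = some v}

theorem Rset_subset_orbit (T : SAut Q A) (w : List A) (d : ℕ) : T.Rset w d ⊆ T.orbit w :=
  fun _ ⟨l, _, hl⟩ => ⟨l, hl⟩

theorem Rset_mono (T : SAut Q A) (w : List A) {d d' : ℕ} (h : d ≤ d') :
    T.Rset w d ⊆ T.Rset w d' := fun _ ⟨l, hl, ha⟩ => ⟨l, le_trans hl h, ha⟩

theorem self_mem_Rset (T : SAut Q A) (w : List A) (d : ℕ) : w ∈ T.Rset w d :=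
  ⟨[], by simp, rfl⟩

theorem orbit_finite [Finite A] (T : SAut Q A) (w : List A) : (T.orbit w).Finite := by
  apply Set.Finite.subset (List.finite_length_eq A w.length)
  rintro v ⟨l, hl⟩
  exact T.act_length l w v hl

theorem Rset_finite [Finite A] (T : SAut Q A) (w : List A) (d : ℕ) : (T.Rset w d).Finite :=
  Set.Finite.subset (T.orbit_finite w) (T.Rset_subset_orbit w d)

theorem orbit_subset_of_stable (T : SAut Q A) (w : List A) (d : ℕ)
    (h : T.Rset w (d + 1) = T.Rset w d) : T.orbit w ⊆ T.Rset w d := by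
  rintro v ⟨l, hl⟩
  induction l using List.reverseRecOn generalizing v with
  | nil => simp only [act] at hl; cases hl; exact T.self_mem_Rset w d
  | append_singleton l q ih =>
    rw [T.act_append_seq l [q] w] at hl
    rw [Option.bind_eq_some_iff] at hl
    obtain ⟨v₀, hv₀, hv⟩ := hl
    obtain ⟨l₁, hl₁, ha₁⟩ := ih hv₀
    have : v ∈ T.Rset w (d + 1) := by
      refine ⟨l₁ ++ [q], by simp; omega, ?_⟩
      rw [T.act_append_seq l₁ [q] w, ha₁, Option.bind_some, hv]
    rwa [h] at this

theorem Rset_growth [Finite A] (T : SAut Q A) (w : List A) :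
    ∀ d : ℕ, min (d + 1) (T.orbit w).ncard ≤ (T.Rset w d).ncard := by
  intro d
  induction d with
  | zero =>
    have h1 : 0 < (T.Rset w 0).ncard :=
      (Set.ncard_pos (T.Rset_finite w 0)).mpr ⟨w, T.self_mem_Rset w 0⟩
    omega
  | succ n ih =>
    by_cases hst : T.Rset w (n+1) = T.Rset w n
    · have horb : T.orbit w ⊆ T.Rset w n := T.orbit_subset_of_stable w n hst
      have h2 : (T.orbit w).ncard ≤ (T.Rset w (n+1)).ncard := by
        rw [hst]; exact Set.ncard_le_ncard horb (T.Rset_finite w n)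
      omega
    · have hsub : T.Rset w n ⊂ T.Rset w (n+1) :=
        (T.Rset_mono w (by omega)).ssubset_of_ne (Ne.symm hst)
      have hlt : (T.Rset w n).ncard < (T.Rset w (n+1)).ncard :=
        Set.ncard_lt_ncard hsub (T.Rset_finite w (n+1))
      omega


end SAut

namespace Excise

open SAut

variable {Q A : Type}

open Classical in
noncomputable def Pfin {m : ℕ} (T : SAut Q A) (wu : Fin m → List A) (l' : Fin m → List Q)
    (x : List A) (i : ℕ) : Finset (Fin m × Fin m) :=
  Finset.univ.filter fun p => p.1 < p.2 ∧
    wu p.1 ++ (T.act (l' p.1) (x.take i)).getD [] ≠ wu p.2 ++ (T.act (l' p.2) (x.take i)).getD []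

lemma mem_Pfin {m : ℕ} (T : SAut Q A) (wu : Fin m → List A) (l' : Fin m → List Q)
    (x : List A) (i : ℕ) (p : Fin m × Fin m) :
    p ∈ Pfin T wu l' x i ↔ p.1 < p.2 ∧
      wu p.1 ++ (T.act (l' p.1) (x.take i)).getD [] ≠
        wu p.2 ++ (T.act (l' p.2) (x.take i)).getD [] := by
  simp [Pfin]

open Classical in
noncomputable def cfgF {m : ℕ} (T : SAut Q A) (wu : Fin m → List A) (l' : Fin m → List Q)
    (x : List A) (i : ℕ) : (Fin m → List Q) × ℕ :=
  (fun j => (T.dual (l' j) (x.take i)).getD [], (Pfin T wu l' x i).card)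

theorem excise [Fintype Q] [Fintype A] (T : SAut Q A) (m L : ℕ) (hm : 1 ≤ m)
    (wu : Fin m → List A) (hwu : ∀ j, (wu j).length = L)
    (l' : Fin m → List Q) (hl' : ∀ j, (l' j).length ≤ m - 1) :
    ∀ (N : ℕ) (x : List A), x.length ≤ N → ∀ (out : Fin m → List A),
      (∀ j, T.act (l' j) x = some (out j)) →
      Function.Injective (fun j => wu j ++ out j) →
      ∃ (x' : List A) (out' : Fin m → List A),
        x'.length < (max 2 (Fintype.card Q)) ^ (Fintype.card A * m ^ 2) * 2 ^ Nat.choose m 2 ∧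
        (∀ j, T.act (l' j) x' = some (out' j)) ∧
        Function.Injective (fun j => wu j ++ out' j) := by
  classical
  intro N
  induction N with
  | zero =>
    intro x hx out hact hinj
    refine ⟨x, out, ?_, hact, hinj⟩
    have h2 : (0:ℕ) < (max 2 (Fintype.card Q)) ^ (Fintype.card A * m ^ 2) * 2 ^ Nat.choose m 2 := by
      positivity
    omega
  | succ N ih =>
    intro x hx out hact hinj
    by_cases hxB : x.length <
        (max 2 (Fintype.card Q)) ^ (Fintype.card A * m ^ 2) * 2 ^ Nat.choose m 2
    · exact ⟨x, out, hxB, hact, hinj⟩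
    push_neg at hxB
    have hxne : x ≠ [] := by
      intro h
      rw [h] at hxB
      simp only [List.length_nil] at hxB
      have h2 : (0:ℕ) < (max 2 (Fintype.card Q)) ^ (Fintype.card A * m ^ 2) * 2 ^ Nat.choose m 2 := by
        positivity
      omega
    have hA : 1 ≤ Fintype.card A := by
      cases x with
      | nil => exact absurd rfl hxne
      | cons a _ => exact Fintype.card_pos_iff.mpr ⟨a⟩
    -- splitting the action at every position
    have split : ∀ i, i ≤ x.length → ∀ j : Fin m, ∃ o s o2,
        T.act (l' j) (x.take i) = some o ∧ T.dual (l' j) (x.take i) = some s ∧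
        T.act s (x.drop i) = some o2 ∧ out j = o ++ o2 := by
      intro i hi j
      have h := T.act_word_append (l' j) (x.take i) (x.drop i)
      rw [List.take_append_drop, hact j] at h
      symm at h
      rw [Option.bind_eq_some_iff] at h
      obtain ⟨o, ho, h⟩ := h
      rw [Option.bind_eq_some_iff] at h
      obtain ⟨s, hs, h⟩ := h
      rw [Option.map_eq_some_iff] at h
      obtain ⟨o2, ho2, heq⟩ := h
      exact ⟨o, s, o2, ho, hs, ho2, heq.symm⟩
    choose o s o2 ho hs ho2 houteq using split
    have olen : ∀ i (hi : i ≤ x.length) (j : Fin m), (o i hi j).length = i := by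
      intro i hi j
      have h := T.act_length _ _ _ (ho i hi j)
      rwa [List.length_take, min_eq_left hi] at h
    -- prefix extension property
    have prefix_ext : ∀ i i' (h1 : i ≤ i') (h2 : i' ≤ x.length) (j : Fin m),
        ∃ z, o i' h2 j = o i (h1.trans h2) j ++ z := by
      intro i i' h1 h2 j
      have hkey := T.act_word_append (l' j) (x.take i) ((x.take i').drop i)
      have htt : x.take i ++ (x.take i').drop i = x.take i' := by
        conv_rhs => rw [← List.take_append_drop i (x.take i')]
        rw [List.take_take, min_eq_left h1]
      rw [htt, ho i' h2 j, ho i (h1.trans h2) j, hs i (h1.trans h2) j] at hkey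
      simp only [Option.bind_some] at hkey
      cases hz : T.act (s i (h1.trans h2) j) ((x.take i').drop i) with
      | none => rw [hz] at hkey; simp at hkey
      | some z =>
        rw [hz] at hkey
        simp only [Option.map_some, Option.some_inj] at hkey
        exact ⟨z, hkey⟩
    -- monotonicity of the pair set
    have Pmono : ∀ i i' (h1 : i ≤ i') (h2 : i' ≤ x.length),
        Pfin T wu l' x i ⊆ Pfin T wu l' x i' := by
      intro i i' h1 h2 p hp
      rw [mem_Pfin] at hp ⊢
      refine ⟨hp.1, ?_⟩
      have hi : i ≤ x.length := h1.trans h2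
      rw [ho i' h2 p.1, ho i' h2 p.2]
      intro hcontr
      apply hp.2
      rw [ho i hi p.1, ho i hi p.2]
      obtain ⟨z1, hz1⟩ := prefix_ext i i' h1 h2 p.1
      obtain ⟨z2, hz2⟩ := prefix_ext i i' h1 h2 p.2
      simp only [Option.getD_some] at hcontr ⊢
      rw [hz1, hz2, ← List.append_assoc, ← List.append_assoc] at hcontr
      have hlen : (wu p.1 ++ o i hi p.1).length = (wu p.2 ++ o i hi p.2).length := by
        simp [hwu, olen]
      exact (List.append_inj hcontr (by simpa using hlen)).1
    -- the pair set is contained in the set of ordered pairs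
    have Pcard : ∀ i, (Pfin T wu l' x i).card ≤ m.choose 2 := by
      intro i
      refine le_trans (Finset.card_le_card ?_) (card_ltpairs m)
      intro p hp
      rw [mem_Pfin] at hp
      simp only [Finset.mem_filter, Finset.mem_univ, true_and]
      exact hp.1
    -- pigeonhole
    have hcard : ((Fintype.piFinset fun _ : Fin m => Fset Q (m-1)) ×ˢ
        Finset.range (m.choose 2 + 1)).card < (Finset.range (x.length + 1)).card := by
      rw [Finset.card_range, Finset.card_product, Finset.card_range, Fintype.card_piFinset]
      have hFc : (Fset Q (m-1)).card ≤ (max 2 (Fintype.card Q)) ^ m :=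
        card_Fset Q hm (le_max_left _ _) (le_max_right _ _)
      calc (∏ _j : Fin m, (Fset Q (m-1)).card) * (m.choose 2 + 1)
          = (Fset Q (m-1)).card ^ m * (m.choose 2 + 1) := by
            rw [Finset.prod_const, Finset.card_univ, Fintype.card_fin]
        _ ≤ ((max 2 (Fintype.card Q)) ^ m) ^ m * 2 ^ (m.choose 2) := by
            apply Nat.mul_le_mul
            · exact Nat.pow_le_pow_left hFc m
            · have := Nat.lt_two_pow_self (n := m.choose 2); omega
        _ = (max 2 (Fintype.card Q)) ^ (m * m) * 2 ^ (m.choose 2) := by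
            rw [← pow_mul]
        _ ≤ (max 2 (Fintype.card Q)) ^ (Fintype.card A * m ^ 2) * 2 ^ (m.choose 2) := by
            apply Nat.mul_le_mul_right
            apply Nat.pow_le_pow_right (by omega)
            have h22 : m * m = m ^ 2 := by ring
            rw [h22]
            calc m ^ 2 = 1 * m ^ 2 := by ring
              _ ≤ Fintype.card A * m ^ 2 := Nat.mul_le_mul_right _ hA
        _ ≤ x.length := hxB
        _ < x.length + 1 := by omega
    have hmaps : ∀ i ∈ Finset.range (x.length + 1), cfgF T wu l' x i ∈
        (Fintype.piFinset fun _ : Fin m => Fset Q (m-1)) ×ˢ Finset.range (m.choose 2 + 1) := by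
      intro i hi
      rw [Finset.mem_range] at hi
      have hi' : i ≤ x.length := by omega
      rw [Finset.mem_product]
      constructor
      · rw [Fintype.mem_piFinset]
        intro j
        show (T.dual (l' j) (x.take i)).getD [] ∈ Fset Q (m-1)
        rw [hs i hi' j, Option.getD_some, mem_Fset]
        rw [T.dual_length _ _ _ (hs i hi' j)]
        exact hl' j
      · rw [Finset.mem_range]
        have := Pcard i
        show (Pfin T wu l' x i).card < m.choose 2 + 1
        omega
    obtain ⟨i0, hi0, i1, hi1, hne, hcfg⟩ :=
      Finset.exists_ne_map_eq_of_card_lt_of_maps_to hcard hmaps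
    rw [Finset.mem_range] at hi0 hi1
    have key : ∀ i i', i < i' → i' ≤ x.length →
        cfgF T wu l' x i = cfgF T wu l' x i' →
        ∃ (x' : List A) (out' : Fin m → List A),
          x'.length < (max 2 (Fintype.card Q)) ^ (Fintype.card A * m ^ 2) * 2 ^ Nat.choose m 2 ∧
          (∀ j, T.act (l' j) x' = some (out' j)) ∧
          Function.Injective (fun j => wu j ++ out' j) := by
      intro i i' hii' hi'len hcfgeq
      have hilen : i ≤ x.length := by omega
      -- equal state tuples
      have hseq : ∀ j, s i hilen j = s i' hi'len j := by
        intro j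
        have h1 := congrArg Prod.fst hcfgeq
        have h2 := congrFun h1 j
        simp only [cfgF] at h2
        rwa [hs i hilen j, hs i' hi'len j, Option.getD_some, Option.getD_some] at h2
      -- equal pair sets
      have hPeq : Pfin T wu l' x i = Pfin T wu l' x i' := by
        apply Finset.eq_of_subset_of_card_le (Pmono i i' (le_of_lt hii') hi'len)
        have h2 := congrArg Prod.snd hcfgeq
        simp only [cfgF] at h2
        omega
      -- the excised word
      set x' := x.take i ++ x.drop i' with hx'
      have hx'len : x'.length = i + (x.length - i') := by
        rw [hx', List.length_append, List.length_take, List.length_drop, min_eq_left hilen]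
      -- new outputs
      refine ih x' (by omega) (fun j => o i hilen j ++ o2 i' hi'len j) ?_ ?_
      · -- action on x'
        intro j
        have h := T.act_word_append (l' j) (x.take i) (x.drop i')
        rw [ho i hilen j, hs i hilen j, hseq j] at h
        simp only [Option.bind_some] at h
        rw [ho2 i' hi'len j] at h
        simpa using h
      · -- injectivity
        intro j j' heq
        by_contra hjj'
        simp only at heq
        have hlenpre : (wu j ++ o i hilen j).length = (wu j' ++ o i hilen j').length := by
          simp [hwu, olen]
        rw [← List.append_assoc, ← List.append_assoc] at heq
        have hpre := (List.append_inj heq (by simpa using hlenpre)).1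
        have hsuf := (List.append_inj heq (by simpa using hlenpre)).2
        -- prefixes equal at i; derive prefixes equal at i' using hPeq
        have horder : ∃ a b : Fin m, a < b ∧ ((a = j ∧ b = j') ∨ (a = j' ∧ b = j)) := by
          rcases lt_or_gt_of_ne hjj' with h | h
          · exact ⟨j, j', h, Or.inl ⟨rfl, rfl⟩⟩
          · exact ⟨j', j, h, Or.inr ⟨rfl, rfl⟩⟩
        obtain ⟨a, b, hab, hcase⟩ := horder
        have hprei : wu a ++ o i hilen a = wu b ++ o i hilen b := by
          rcases hcase with ⟨rfl, rfl⟩ | ⟨rfl, rfl⟩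
          · exact hpre
          · exact hpre.symm
        have hnotmem : (a, b) ∉ Pfin T wu l' x i := by
          rw [mem_Pfin]
          push_neg
          intro _
          rw [ho i hilen a, ho i hilen b, Option.getD_some, Option.getD_some]
          exact hprei
        rw [hPeq] at hnotmem
        rw [mem_Pfin] at hnotmem
        push_neg at hnotmem
        have hprei' : wu a ++ o i' hi'len a = wu b ++ o i' hi'len b := by
          have := hnotmem hab
          rwa [ho i' hi'len a, ho i' hi'len b, Option.getD_some, Option.getD_some] at this
        have hpreJ : wu j ++ o i' hi'len j = wu j' ++ o i' hi'len j' := by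
          rcases hcase with ⟨rfl, rfl⟩ | ⟨rfl, rfl⟩
          · exact hprei'
          · exact hprei'.symm
        -- original injectivity forces the suffixes to differ
        have horig : wu j ++ out j ≠ wu j' ++ out j' := by
          intro h
          exact hjj' (hinj h)
        rw [houteq i' hi'len j, houteq i' hi'len j'] at horig
        rw [← List.append_assoc, ← List.append_assoc, hpreJ] at horig
        exact horig (by rw [hsuf])
    exact (lt_or_gt_of_ne hne).elim (fun hlt => key i0 i1 hlt (by omega) hcfg)
      (fun hlt => key i1 i0 hlt (by omega) hcfg.symm)
end Excise

/-- `u` is `k`-expandable iff it is `k`-expandable by a word of length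
`< (max {2, |Q|})^(|Σ|(n+k)²) · 2^C(n+k, 2)`. -/
theorem expandability_upper_bound_semigroup {Q A : Type} [Fintype Q] [Fintype A]
    (T : SAut Q A) (u : List A) (k : ℕ) (hk : 1 ≤ k) :
    (∃ x : List A, (T.orbit u).ncard + k ≤ (T.orbit (u ++ x)).ncard) ↔
      (∃ x : List A,
        x.length < (max 2 (Fintype.card Q)) ^
            (Fintype.card A * ((T.orbit u).ncard + k) ^ 2) *
          2 ^ Nat.choose ((T.orbit u).ncard + k) 2 ∧
        (T.orbit u).ncard + k ≤ (T.orbit (u ++ x)).ncard) := by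
  classical
  constructor
  · rintro ⟨x, hx⟩
    set m := (T.orbit u).ncard + k with hmdef
    have hm1 : 1 ≤ m := by omega
    have hR : m ≤ (T.Rset (u ++ x) (m - 1)).ncard := by
      have hg := T.Rset_growth (u ++ x) (m - 1)
      omega
    obtain ⟨t, hts, htcard⟩ := Set.exists_subset_card_eq hR
    have htfin : t.Finite := (T.Rset_finite (u ++ x) (m - 1)).subset hts
    have hftc : htfin.toFinset.card = m := by
      rw [← Set.ncard_eq_toFinset_card t htfin, htcard]
    set e := Finset.equivFinOfCardEq hftc with he
    set v : Fin m → List A := fun j => ((e.symm j : htfin.toFinset) : List A) with hv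
    have hvinj : Function.Injective v := by
      intro j j' h
      apply e.symm.injective
      exact Subtype.ext h
    have hvmem : ∀ j, v j ∈ T.Rset (u ++ x) (m - 1) := by
      intro j
      have := (e.symm j).2
      rw [Set.Finite.mem_toFinset] at this
      exact hts this
    choose l hlen hactl using hvmem
    have hdec : ∀ j, ∃ wuj l'j outj, T.act (l j) u = some wuj ∧
        T.dual (l j) u = some l'j ∧ T.act l'j x = some outj ∧ v j = wuj ++ outj := by
      intro j
      have h := T.act_word_append (l j) u x
      rw [hactl j] at h
      symm at h
      rw [Option.bind_eq_some_iff] at h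
      obtain ⟨wuj, hwuj, h⟩ := h
      rw [Option.bind_eq_some_iff] at h
      obtain ⟨l'j, hl'j, h⟩ := h
      rw [Option.map_eq_some_iff] at h
      obtain ⟨outj, houtj, heq⟩ := h
      exact ⟨wuj, l'j, outj, hwuj, hl'j, houtj, heq.symm⟩
    choose wuF l'F outF h1 h2 h3 h4 using hdec
    have hwulen : ∀ j, (wuF j).length = u.length := fun j => T.act_length _ _ _ (h1 j)
    have hl'len : ∀ j, (l'F j).length ≤ m - 1 := by
      intro j
      rw [T.dual_length _ _ _ (h2 j)]
      exact hlen j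
    have hinj' : Function.Injective fun j => wuF j ++ outF j := by
      intro j j' hh
      apply hvinj
      rw [h4 j, h4 j']
      exact hh
    obtain ⟨x', out', hx'len, hact', hinj''⟩ :=
      Excise.excise T m u.length hm1 wuF hwulen l'F hl'len x.length x le_rfl outF h3 hinj'
    refine ⟨x', hx'len, ?_⟩
    have hmem : ∀ j, wuF j ++ out' j ∈ T.orbit (u ++ x') := by
      intro j
      refine ⟨l j, ?_⟩
      rw [T.act_word_append, h1 j, h2 j, Option.bind_some, Option.bind_some, hact' j,
        Option.map_some]
    have hrange : Set.range (fun j => wuF j ++ out' j) ⊆ T.orbit (u ++ x') := by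
      rintro y ⟨j, rfl⟩
      exact hmem j
    have hr1 : (Set.range fun j => wuF j ++ out' j).ncard = m := by
      rw [← Set.image_univ, Set.ncard_image_of_injective _ hinj'', Set.ncard_univ,
        Nat.card_eq_fintype_card, Fintype.card_fin]
    have := Set.ncard_le_ncard hrange (T.orbit_finite (u ++ x'))
    omega
  · rintro ⟨x, _, h⟩
    exact ⟨x, h⟩
end
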